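/- arXiv:2202.11324 — 2 statements merged into one kernel-verified Lean document; each statement's English description precedes it below -/
import Mathlib

section
/- Let X be a δ-hyperbolic geodesic metric space and f : ℝ_{≥0} → ℝ_{≥0} a subexponential monotonic increasing function. Then there exists a constant K = K(f, δ) such that every f-quasi-geodesic in X is a K-quasi-geodesic. -/
/-!
Fix `p ≤ q`, a geodesic `g` of length `d` from `c p` to `c q`, and let `D` be the largest
distance from a point `g u₀` to `c([p, q])`. The points `g (u₀ ∓ D)` have nearest points `c s`,
`c t` with `dist (c s) (c t) ≤ 4D`, so `|t - s| ≤ f(4D)(4D + 1)`. The path from `c s` to `c t`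
stays at distance `≥ D` from `g u₀`, which lies between `g (u₀ ∓ D)`; bisecting it `n` times with
the four-point condition gives `D ≤ 2(n + 2)δ + |t - s| / 2ⁿ`. Taking `n ≈ D / 4δ`,
subexponential growth of `f` bounds `D` by a constant `R`. Chopping `g` into `⌈d⌉ + 1` pieces of
length `≤ 1` and picking path points within `R` of the division points then gives
`q - p ≤ (d + 2) f(2R + 1)(2R + 2)`.
-/

open Filter Set Metric Asymptotics

section Hyperbolic

variable {X : Type*} [PseudoMetricSpace X]

def FourPointHyperbolic (X : Type*) [PseudoMetricSpace X] (δ : ℝ) : Prop :=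
  ∀ x y z w : X, dist x y + dist z w ≤ max (dist x z + dist y w) (dist x w + dist y z) + 2 * δ

noncomputable def gromovProduct (w x y : X) : ℝ := (dist w x + dist w y - dist x y) / 2

theorem gromovProduct_comm (w x y : X) : gromovProduct w x y = gromovProduct w y x := by
  simp only [gromovProduct, dist_comm x y, add_comm (dist w x)]

variable {δ : ℝ}

theorem FourPointHyperbolic.mono {δ' : ℝ} (hX : FourPointHyperbolic X δ) (h : δ ≤ δ') :
    FourPointHyperbolic X δ' := fun x y z w => by linarith [hX x y z w]

theorem FourPointHyperbolic.min_sub_le_gromovProduct (hX : FourPointHyperbolic X δ)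
    (w x y z : X) :
    min (gromovProduct w x y) (gromovProduct w y z) - δ ≤ gromovProduct w x z := by
  have h := hX x z y w
  have h₁ := min_le_left (gromovProduct w x y) (gromovProduct w y z)
  have h₂ := min_le_right (gromovProduct w x y) (gromovProduct w y z)
  unfold gromovProduct at *
  rcases max_cases (dist x y + dist z w) (dist x w + dist z y) with ⟨hm, -⟩ | ⟨hm, -⟩ <;>
    rw [hm] at h <;> linarith [dist_comm w x, dist_comm w y, dist_comm w z, dist_comm z y]

theorem FourPointHyperbolic.sub_le_gromovProduct_of_forall_le_dist
    (hX : FourPointHyperbolic X δ) {w : X} {c : ℝ → X} {D : ℝ} (n : ℕ) {a b : ℝ} (hab : a ≤ b)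
    (hc : LipschitzOnWith 1 c (Icc a b)) (hD : ∀ r ∈ Icc a b, D ≤ dist w (c r)) :
    D - n * δ - (b - a) / 2 ^ (n + 1) ≤ gromovProduct w (c a) (c b) := by
  induction n generalizing a b with
  | zero =>
    have hcab := hc.dist_le_mul a ⟨le_rfl, hab⟩ b ⟨hab, le_rfl⟩
    rw [Real.dist_eq, abs_of_nonpos (by linarith)] at hcab
    have := hD a ⟨le_rfl, hab⟩
    have := hD b ⟨hab, le_rfl⟩
    simp only [gromovProduct, CharP.cast_eq_zero, zero_add, pow_one]
    push_cast at hcab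
    linarith
  | succ n ih =>
    set m := (a + b) / 2 with hm
    have ham : a ≤ m := by linarith [hm]
    have hmb : m ≤ b := by linarith [hm]
    have h₁ := ih ham (hc.mono (Icc_subset_Icc_right hmb))
      fun r hr => hD r ⟨hr.1, hr.2.trans hmb⟩
    have h₂ := ih hmb (hc.mono (Icc_subset_Icc_left ham))
      fun r hr => hD r ⟨ham.trans hr.1, hr.2⟩
    have h₃ := hX.min_sub_le_gromovProduct w (c a) (c m) (c b)
    have hma : m - a = (b - a) / 2 := by ring
    have hbm : b - m = (b - a) / 2 := by ring
    rw [hma, div_div, ← pow_succ'] at h₁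
    rw [hbm, div_div, ← pow_succ'] at h₂
    push_cast
    linarith [le_min h₁ h₂]

theorem FourPointHyperbolic.le_of_gromovProduct_eq_zero (hX : FourPointHyperbolic X δ)
    (hδ : 0 ≤ δ) {w y z : X} (hyz : gromovProduct w y z = 0) {c : ℝ → X} {s t D : ℝ}
    (hc : LipschitzOnWith 1 c (uIcc s t)) (hD : ∀ r ∈ uIcc s t, D ≤ dist w (c r))
    (hy : D / 2 ≤ gromovProduct w y (c s)) (hz : D / 2 ≤ gromovProduct w (c t) z) (n : ℕ) :
    D ≤ 2 * (n + 2) * δ + |t - s| / 2 ^ n := by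
  wlog hst : s ≤ t generalizing y z s t
  · rw [abs_sub_comm]
    rw [gromovProduct_comm] at hyz hy hz
    rw [uIcc_comm] at hc hD
    exact this hyz hc hD hz hy (le_of_not_ge hst)
  rw [uIcc_of_le hst] at hc hD
  rw [abs_of_nonneg (sub_nonneg.2 hst)]
  have hE0 : 0 ≤ (t - s) / 2 ^ n := by positivity
  have hnδ : 0 ≤ n * δ := by positivity
  rcases lt_or_ge D 0 with hD0 | hD0
  · linarith
  have hE : (t - s) / 2 ^ (n + 1) = (t - s) / 2 ^ n / 2 := by rw [pow_succ, div_div]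
  have hst' := hX.sub_le_gromovProduct_of_forall_le_dist n hst hc hD
  have h₁ := hX.min_sub_le_gromovProduct w (c s) (c t) z
  have h₂ := hX.min_sub_le_gromovProduct w y (c s) z
  have h₃ : D / 2 - n * δ - (t - s) / 2 ^ (n + 1) ≤
      min (gromovProduct w (c s) (c t)) (gromovProduct w (c t) z) :=
    le_min (by linarith) (by linarith)
  have h₄ : D / 2 - n * δ - (t - s) / 2 ^ (n + 1) - δ ≤
      min (gromovProduct w y (c s)) (gromovProduct w (c s) z) :=
    le_min (by linarith) (by linarith)
  linarith

theorem FourPointHyperbolic.exists_fellow_traveller_bound (hX : FourPointHyperbolic X δ)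
    (hδ : 0 ≤ δ) {c g : ℝ → X} {p q d : ℝ} (hpq : p ≤ q) (hc : LipschitzOnWith 1 c (Icc p q))
    (hd : 0 ≤ d)
    (hg : ∀ u ∈ Icc 0 d, ∀ v ∈ Icc 0 d, dist (g u) (g v) = |u - v|)
    (hg0 : g 0 = c p) (hgd : g d = c q) :
    ∃ D, (∀ u ∈ Icc 0 d, ∃ s ∈ Icc p q, dist (g u) (c s) ≤ D) ∧
      ∃ s ∈ Icc p q, ∃ t ∈ Icc p q, dist (c s) (c t) ≤ 4 * D ∧
        ∀ n : ℕ, D ≤ 2 * (n + 2) * δ + |t - s| / 2 ^ n := by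
  set S := c '' Icc p q
  have hS : IsCompact S := isCompact_Icc.image_of_continuousOn hc.continuousOn
  have hnear (u : ℝ) : ∃ s ∈ Icc p q, dist (g u) (c s) = infDist (g u) S := by
    obtain ⟨_, ⟨s, hs, rfl⟩, h⟩ :=
      hS.exists_infDist_eq_dist ⟨c p, mem_image_of_mem c ⟨le_rfl, hpq⟩⟩ (g u)
    exact ⟨s, hs, h.symm⟩
  have hg' : LipschitzOnWith 1 g (Icc 0 d) :=
    LipschitzOnWith.of_dist_le_mul fun u hu v hv => by simp [hg u hu v hv, Real.dist_eq]
  obtain ⟨u₀, hu₀, hmax⟩ := isCompact_Icc.exists_isMaxOn ⟨0, le_rfl, hd⟩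
    ((continuous_infDist_pt S).comp_continuousOn hg'.continuousOn)
  set D := infDist (g u₀) S
  have hfar (r : ℝ) (hr : r ∈ Icc p q) : D ≤ dist (g u₀) (c r) :=
    infDist_le_dist_of_mem (mem_image_of_mem c hr)
  have hdist {u v : ℝ} (hu : 0 ≤ u) (huv : u ≤ v) (hv : v ≤ d) : dist (g u) (g v) = v - u := by
    rw [hg u ⟨hu, huv.trans hv⟩ v ⟨hu.trans huv, hv⟩, abs_sub_comm, abs_of_nonneg (by linarith)]
  -- The endpoints of `g` lie on the path, so `g (u₀ ∓ D)` are still points of the geodesic.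
  have hDu₀ : D ≤ u₀ := by
    have := hfar p ⟨le_rfl, hpq⟩
    rwa [← hg0, dist_comm, hdist le_rfl hu₀.1 hu₀.2, sub_zero] at this
  have hDu₀' : D ≤ d - u₀ := by
    simpa [← hgd, hdist hu₀.1 hu₀.2 le_rfl] using hfar q ⟨hpq, le_rfl⟩
  have hD0 : 0 ≤ D := infDist_nonneg
  obtain ⟨s, hs, hsD⟩ := hnear (u₀ - D)
  obtain ⟨t, ht, htD⟩ := hnear (u₀ + D)
  have hsD' : dist (g (u₀ - D)) (c s) ≤ D := hsD ▸ hmax ⟨by linarith, by linarith⟩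
  have htD' : dist (g (u₀ + D)) (c t) ≤ D := htD ▸ hmax ⟨by linarith, by linarith⟩
  have h₁ : dist (g (u₀ - D)) (g u₀) = D := by
    rw [hdist (by linarith) (by linarith) hu₀.2]; ring
  have h₂ : dist (g u₀) (g (u₀ + D)) = D := by
    rw [hdist hu₀.1 (by linarith) (by linarith)]; ring
  have h₃ : dist (g (u₀ - D)) (g (u₀ + D)) = 2 * D := by
    rw [hdist (by linarith) (by linarith) (by linarith)]; ring
  refine ⟨D, fun u hu => ?_, s, hs, t, ht, ?_, fun n => ?_⟩
  · obtain ⟨s, hs, h⟩ := hnear u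
    exact ⟨s, hs, h ▸ hmax hu⟩
  · linarith [dist_triangle4 (c s) (g (u₀ - D)) (g (u₀ + D)) (c t),
      dist_comm (c s) (g (u₀ - D))]
  · have hsub : uIcc s t ⊆ Icc p q := uIcc_subset_Icc hs ht
    refine hX.le_of_gromovProduct_eq_zero hδ (w := g u₀) (y := g (u₀ - D)) (z := g (u₀ + D))
      ?_ (hc.mono hsub) (fun r hr => hfar r (hsub hr)) ?_ ?_ n
    · rw [gromovProduct, dist_comm (g u₀), h₁, h₂, h₃]; ring
    · simp only [gromovProduct]
      linarith [dist_comm (g u₀) (g (u₀ - D)), hfar s hs]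
    · simp only [gromovProduct]
      linarith [dist_comm (c t) (g (u₀ + D)), hfar t ht]

end Hyperbolic

def Subexponential (f : ℝ → ℝ) : Prop :=
  ∀ ε : ℝ, 0 < ε → Tendsto (fun t => f t / Real.exp (ε * t)) atTop (nhds 0)

namespace Subexponential

variable {f : ℝ → ℝ}

theorem isLittleO (hf : Subexponential f) {ε : ℝ} (hε : 0 < ε) :
    f =o[atTop] fun t => Real.exp (ε * t) :=
  isLittleO_of_tendsto (fun _ h => absurd h (Real.exp_pos _).ne') (hf ε hε)

theorem eventually_comp_mul_le_exp (hf : Subexponential f) {a κ : ℝ} (ha : 0 < a)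
    (hκ : 0 < κ) : ∀ᶠ t in atTop, f (a * t) * (a * t + 1) ≤ Real.exp (κ * t) := by
  have h₁ : (fun t => f (a * t)) =o[atTop] fun t => Real.exp (κ / 2 * t) := by
    refine ((hf.isLittleO (ε := κ / (2 * a)) (by positivity)).comp_tendsto
      (tendsto_id.const_mul_atTop ha)).congr_right fun t => ?_
    simp only [Function.comp_apply, id]
    congr 1
    field_simp
  have h₂ : (fun t => a * t + 1) =O[atTop] fun t => Real.exp (κ / 2 * t) := by
    simpa using (((isLittleO_pow_exp_pos_mul_atTop 1 (half_pos hκ)).const_mul_left a).add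
      (isLittleO_pow_exp_pos_mul_atTop 0 (half_pos hκ))).isBigO
  filter_upwards [(h₁.mul_isBigO h₂).bound one_pos] with t ht
  calc f (a * t) * (a * t + 1) ≤ ‖f (a * t) * (a * t + 1)‖ := Real.le_norm_self _
    _ ≤ Real.exp (κ * t) := by
      rw [one_mul, ← Real.exp_add, Real.norm_of_nonneg (Real.exp_pos _).le] at ht
      convert ht using 2
      ring

end Subexponential

theorem le_of_forall_le_add_div_two_pow {δ D Λ : ℝ} (hδ : 0 < δ)
    (hΛ : Λ ≤ 2 ^ (D / (4 * δ))) (h : ∀ n : ℕ, D ≤ 2 * (n + 2) * δ + Λ / 2 ^ n) :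
    D ≤ 12 * δ + 2 := by
  rcases lt_or_ge D 0 with hD | hD
  · linarith
  set n := ⌈D / (4 * δ)⌉₊
  have hn : (n : ℝ) < D / (4 * δ) + 1 := Nat.ceil_lt_add_one (by positivity)
  have hΛn : Λ / 2 ^ n ≤ 1 := by
    refine div_le_one_of_le₀ (hΛ.trans ?_) (by positivity)
    rw [← Real.rpow_natCast]
    exact Real.rpow_le_rpow_of_exponent_le one_le_two (Nat.le_ceil _)
  rw [div_add_one (by positivity), lt_div_iff₀ (by positivity)] at hn
  linarith [h n]

theorem Subexponential.exists_forall_le {f : ℝ → ℝ} (hf : Subexponential f) {δ : ℝ}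
    (hδ : 0 < δ) :
    ∃ R, 0 ≤ R ∧
      ∀ D, (∀ n : ℕ, D ≤ 2 * (n + 2) * δ + f (4 * D) * (4 * D + 1) / 2 ^ n) → D ≤ R := by
  obtain ⟨T, hT⟩ := eventually_atTop.1 <|
    hf.eventually_comp_mul_le_exp four_pos (κ := Real.log 2 / (4 * δ)) (by positivity)
  refine ⟨max T (12 * δ + 2), le_max_of_le_right (by positivity), fun D hD => ?_⟩
  rcases lt_or_ge D T with hDT | hDT
  · exact hDT.le.trans (le_max_left _ _)
  · refine (le_of_forall_le_add_div_two_pow hδ ?_ hD).trans (le_max_right _ _)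
    rw [Real.rpow_def_of_pos two_pos]
    convert hT D hDT using 2
    ring

theorem mul_div_mem_Icc {d : ℝ} (hd : 0 ≤ d) {j N : ℕ} (hj : j ≤ N) :
    (j : ℝ) * (d / N) ∈ Icc 0 d := by
  rcases N.eq_zero_or_pos with rfl | hN
  · simp [hd]
  refine ⟨by positivity, ?_⟩
  calc (j : ℝ) * (d / N) ≤ N * (d / N) := by gcongr
    _ = d := mul_div_cancel₀ d (by positivity)

section QuasiGeodesic

variable {X : Type*} [PseudoMetricSpace X]

/-- The `f`-quasi-geodesic inequality on `[a, b]`; parametrisation by arc length is a separate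
`LipschitzOnWith 1` hypothesis. -/
def QuasiGeodesicWith (f : ℝ → ℝ) (c : ℝ → X) (a b : ℝ) : Prop :=
  ∀ p q : ℝ, a ≤ p → p ≤ q → q ≤ b →
    q - p ≤ f (dist (c p) (c q)) * dist (c p) (c q) + f (dist (c p) (c q))

theorem exists_seq_near_division_points {c g : ℝ → X} {a b d R : ℝ} {N : ℕ} (hN : N ≠ 0)
    (hd : 0 ≤ d) (hg0 : g 0 = c a) (hgd : g d = c b)
    (hR : ∀ u ∈ Icc 0 d, ∃ s ∈ Icc a b, dist (g u) (c s) ≤ R) :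
    ∃ t : ℕ → ℝ, t 0 = a ∧ t N = b ∧
      ∀ j ≤ N, t j ∈ Icc a b ∧ dist (g (j * (d / N))) (c (t j)) ≤ R := by
  obtain ⟨s₀, hs₀, hR₀⟩ := hR 0 ⟨le_rfl, hd⟩
  have hab : a ≤ b := hs₀.1.trans hs₀.2
  have hR0 : 0 ≤ R := dist_nonneg.trans hR₀
  choose! τ hτ using hR
  refine ⟨fun j => if j = 0 then a else if j = N then b else τ (j * (d / N)), rfl,
    by simp [hN], fun j hj => ?_⟩
  by_cases hj0 : j = 0
  · simp [hj0, hg0, hab, hR0]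
  by_cases hjN : j = N
  · simp [hjN, hN, mul_div_cancel₀ d (Nat.cast_ne_zero.2 hN), hgd, hab, hR0]
  simp only [hj0, hjN, if_false]
  exact hτ _ (mul_div_mem_Icc hd hj)

namespace QuasiGeodesicWith

variable {f : ℝ → ℝ} {c : ℝ → X} {a b : ℝ}

theorem mono (hc : QuasiGeodesicWith f c a b) {a' b' : ℝ} (ha : a ≤ a') (hb : b' ≤ b) :
    QuasiGeodesicWith f c a' b' := fun p q hp hpq hq => hc p q (ha.trans hp) hpq (hq.trans hb)

theorem abs_sub_le (hc : QuasiGeodesicWith f c a b) (hf : Monotone f) {s t R : ℝ}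
    (hR : 0 ≤ f R) (hs : s ∈ Icc a b) (ht : t ∈ Icc a b) (hst : dist (c s) (c t) ≤ R) :
    |t - s| ≤ f R * (R + 1) := by
  wlog hle : s ≤ t generalizing s t
  · rw [abs_sub_comm]
    exact this ht hs (dist_comm (c s) (c t) ▸ hst) (le_of_not_ge hle)
  rw [abs_of_nonneg (sub_nonneg.2 hle)]
  have hfst := hf hst
  calc t - s ≤ f (dist (c s) (c t)) * dist (c s) (c t) + f (dist (c s) (c t)) :=
        hc s t hs.1 hle ht.2
    _ ≤ f R * R + f R := by gcongr
    _ = f R * (R + 1) := by ring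

theorem sub_le_of_forall_exists_dist_le (hc : QuasiGeodesicWith f c a b) (hf : Monotone f)
    {g : ℝ → X} {d R : ℝ} (hfR : 0 ≤ f (2 * R + 1)) (hd : 0 ≤ d)
    (hg : ∀ u ∈ Icc 0 d, ∀ v ∈ Icc 0 d, dist (g u) (g v) = |u - v|)
    (hg0 : g 0 = c a) (hgd : g d = c b)
    (hR : ∀ u ∈ Icc 0 d, ∃ s ∈ Icc a b, dist (g u) (c s) ≤ R) :
    b - a ≤ (d + 2) * (f (2 * R + 1) * (2 * R + 2)) := by
  set N := ⌈d⌉₊ + 1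
  have hN : (0 : ℝ) < N := by positivity
  have hdN : d < N := by have := Nat.le_ceil d; push_cast [N]; linarith
  have hNd : (N : ℝ) ≤ d + 2 := by have := Nat.ceil_lt_add_one hd; push_cast [N]; linarith
  set h := d / N
  have hh : 0 ≤ h ∧ h ≤ 1 := ⟨by positivity, div_le_one_of_le₀ hdN.le hN.le⟩
  obtain ⟨t, ht0, htN, ht⟩ :=
    exists_seq_near_division_points (N := N) (Nat.succ_ne_zero _) hd hg0 hgd hR
  have hstep (j : ℕ) (hj : j < N) : dist (t j) (t (j + 1)) ≤ f (2 * R + 1) * (2 * R + 2) := by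
    obtain ⟨hj₁, hj₁'⟩ := ht j hj.le
    obtain ⟨hj₂, hj₂'⟩ := ht (j + 1) hj
    have hgj : dist (g (j * h)) (g ((j + 1 : ℕ) * h)) ≤ 1 := by
      have hsub : ((j + 1 : ℕ) : ℝ) * h - j * h = h := by push_cast; ring
      rw [hg _ (mul_div_mem_Icc hd hj.le) _ (mul_div_mem_Icc hd hj), abs_sub_comm, hsub,
        abs_of_nonneg hh.1]
      exact hh.2
    have := hc.abs_sub_le hf hfR hj₁ hj₂ (by
      linarith [dist_triangle4 (c (t j)) (g (j * h)) (g ((j + 1 : ℕ) * h)) (c (t (j + 1))),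
        dist_comm (c (t j)) (g (j * h))])
    rw [Real.dist_eq, abs_sub_comm]
    linarith
  have hsum := dist_le_range_sum_of_dist_le (f := t) N fun hj => hstep _ hj
  rw [Finset.sum_const, Finset.card_range, nsmul_eq_mul, ht0, htN, Real.dist_eq,
    abs_sub_comm] at hsum
  have hR0 : 0 ≤ R := dist_nonneg.trans (ht 0 N.zero_le).2
  have hM : 0 ≤ f (2 * R + 1) * (2 * R + 2) := mul_nonneg hfR (by linarith)
  nlinarith [le_abs_self (b - a), mul_le_mul_of_nonneg_right hNd hM]

end QuasiGeodesicWith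

end QuasiGeodesic

theorem stmt4_general {X : Type*} [MetricSpace X] (δ : ℝ)
    (hhyp : ∀ x y z w : X,
      dist x y + dist z w ≤ max (dist x z + dist y w) (dist x w + dist y z) + 2 * δ)
    (hgeo : ∀ x y : X, ∃ g : ℝ → X, g 0 = x ∧ g (dist x y) = y ∧
      ∀ s ∈ Set.Icc (0 : ℝ) (dist x y), ∀ t ∈ Set.Icc (0 : ℝ) (dist x y),
        dist (g s) (g t) = |s - t|)
    (f : ℝ → ℝ) (hmono : Monotone f) (hpos : ∀ t, 0 ≤ f t)
    (hsub : ∀ ε : ℝ, 0 < ε →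
      Tendsto (fun t => f t / Real.exp (ε * t)) atTop (nhds 0)) :
    ∃ K : ℝ, ∀ (L : ℝ) (c : ℝ → X), 0 ≤ L →
      (∀ p ∈ Set.Icc 0 L, ∀ q ∈ Set.Icc 0 L, dist (c p) (c q) ≤ |p - q|) →
      (∀ p q : ℝ, 0 ≤ p → p ≤ q → q ≤ L →
        q - p ≤ f (dist (c p) (c q)) * dist (c p) (c q) + f (dist (c p) (c q))) →
      (∀ p q : ℝ, 0 ≤ p → p ≤ q → q ≤ L →
        q - p ≤ K * dist (c p) (c q) + K) := by
  have hX : FourPointHyperbolic X (max δ 1) := FourPointHyperbolic.mono hhyp (le_max_left δ 1)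
  have hδ : 0 < max δ 1 := lt_max_of_lt_right one_pos
  obtain ⟨R, hR0, hR⟩ := Subexponential.exists_forall_le hsub hδ
  have hM : 0 ≤ f (2 * R + 1) * (2 * R + 2) := mul_nonneg (hpos _) (by linarith)
  refine ⟨2 * (f (2 * R + 1) * (2 * R + 2)), fun L c _ hlip hf p q hp hpq hqL => ?_⟩
  have hc : LipschitzOnWith 1 c (Icc p q) :=
    (LipschitzOnWith.of_dist_le_mul fun s hs t ht => by
      simpa [Real.dist_eq] using hlip s hs t ht).mono (Icc_subset_Icc hp hqL)
  have hcq : QuasiGeodesicWith f c p q := QuasiGeodesicWith.mono (f := f) hf hp hqL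
  obtain ⟨g, hg0, hgd, hg⟩ := hgeo (c p) (c q)
  obtain ⟨D, hnear, s, hs, t, ht, hst, hD⟩ :=
    hX.exists_fellow_traveller_bound hδ.le hpq hc dist_nonneg hg hg0 hgd
  have hDR : D ≤ R := hR D fun n => (hD n).trans <| by
    gcongr
    exact hcq.abs_sub_le hmono (hpos _) hs ht hst
  have := hcq.sub_le_of_forall_exists_dist_le hmono (hpos _) dist_nonneg hg hg0 hgd
    fun u hu => (hnear u hu).imp fun _ ⟨hs, h⟩ => ⟨hs, h.trans hDR⟩
  nlinarith [mul_nonneg hM (dist_nonneg (x := c p) (y := c q))]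

/-- Let `X` be a `δ`-hyperbolic geodesic metric space (four-point
condition) and `f` a monotone, nonnegative, subexponential function. Then there is a
constant `K = K(f, δ)` such that every path parametrised by arc length satisfying the
`f`-quasi-geodesic condition is a `K`-quasi-geodesic. -/
theorem stmt4 {X : Type*} [MetricSpace X] (δ : ℝ) (hδ : 0 ≤ δ)
    (hhyp : ∀ x y z w : X,
      dist x y + dist z w ≤ max (dist x z + dist y w) (dist x w + dist y z) + 2 * δ)
    (hgeo : ∀ x y : X, ∃ g : ℝ → X, g 0 = x ∧ g (dist x y) = y ∧
      ∀ s ∈ Set.Icc (0 : ℝ) (dist x y), ∀ t ∈ Set.Icc (0 : ℝ) (dist x y),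
        dist (g s) (g t) = |s - t|)
    (f : ℝ → ℝ) (hmono : Monotone f) (hpos : ∀ t, 0 ≤ f t)
    (hsub : ∀ ε : ℝ, 0 < ε →
      Tendsto (fun t => f t / Real.exp (ε * t)) atTop (nhds 0)) :
    ∃ K : ℝ, ∀ (L : ℝ) (c : ℝ → X), 0 ≤ L →
      (∀ p ∈ Set.Icc 0 L, ∀ q ∈ Set.Icc 0 L, dist (c p) (c q) ≤ |p - q|) →
      (∀ p q : ℝ, 0 ≤ p → p ≤ q → q ≤ L →
        q - p ≤ f (dist (c p) (c q)) * dist (c p) (c q) + f (dist (c p) (c q))) →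
      (∀ p q : ℝ, 0 ≤ p → p ≤ q → q ≤ L →
        q - p ≤ K * dist (c p) (c q) + K) :=
  stmt4_general δ hhyp hgeo f hmono hpos hsub
end

section
/- Every subexponentially distorted finitely generated subgroup of a hyperbolic group is undistorted, and hence quasi-convex. -/
open Filter

/-- Word length of `g` with respect to a (symmetrised) generating set `S`. -/
noncomputable def relLength {G : Type*} [Group G] (S : Set G) (g : G) : ℕ :=
  sInf {n | ∃ w : List G, w.length = n ∧ (∀ x ∈ w, x ∈ S ∨ x⁻¹ ∈ S) ∧ w.prod = g}

/-- A function `ℕ → ℕ` is subexponential if it is `o(e^{εn})` for every `ε > 0`. -/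
def SubexpFun (f : ℕ → ℕ) : Prop :=
  ∀ ε : ℝ, 0 < ε →
    Tendsto (fun n : ℕ => (f n : ℝ) / Real.exp (ε * n)) atTop (nhds 0)

namespace RL
variable {G : Type*} [Group G] {S : Set G}

lemma le_of_word {w : List G} (hw : ∀ x ∈ w, x ∈ S ∨ x⁻¹ ∈ S) :
    relLength S w.prod ≤ w.length := Nat.sInf_le ⟨w, rfl, hw, rfl⟩

lemma exists_word_of_mem_closure {g : G} (hg : g ∈ Subgroup.closure S) :
    ∃ w : List G, (∀ x ∈ w, x ∈ S ∨ x⁻¹ ∈ S) ∧ w.prod = g := by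
  induction hg using Subgroup.closure_induction with
  | mem s hs => exact ⟨[s], by simpa using Or.inl hs, by simp⟩
  | one => exact ⟨[], by simp, by simp⟩
  | mul a b _ _ ha hb =>
    obtain ⟨u, hu, hup⟩ := ha
    obtain ⟨v, hv, hvp⟩ := hb
    refine ⟨u ++ v, ?_, by simp [hup, hvp]⟩
    intro x hx
    rcases List.mem_append.1 hx with h | h
    exacts [hu x h, hv x h]
  | inv a _ ha =>
    obtain ⟨u, hu, hup⟩ := ha
    refine ⟨(u.map fun x => x⁻¹).reverse, ?_, by rw [← List.prod_inv_reverse, hup]⟩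
    intro x hx
    simp only [List.mem_reverse, List.mem_map] at hx
    obtain ⟨y, hy, rfl⟩ := hx
    rcases hu y hy with h | h
    · exact Or.inr (by simpa using h)
    · exact Or.inl h

lemma spec {g : G} (hg : g ∈ Subgroup.closure S) :
    ∃ w : List G, w.length = relLength S g ∧ (∀ x ∈ w, x ∈ S ∨ x⁻¹ ∈ S) ∧ w.prod = g := by
  have hne : {n | ∃ w : List G, w.length = n ∧ (∀ x ∈ w, x ∈ S ∨ x⁻¹ ∈ S) ∧ w.prod = g}.Nonempty := by
    obtain ⟨w, hw, hwp⟩ := exists_word_of_mem_closure hg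
    exact ⟨w.length, w, rfl, hw, hwp⟩
  exact Nat.sInf_mem hne

lemma one : relLength S (1 : G) = 0 :=
  Nat.le_zero.1 (by simpa using le_of_word (S := S) (w := []) (by simp))

lemma mul_le {g h : G} (hg : g ∈ Subgroup.closure S) (hh : h ∈ Subgroup.closure S) :
    relLength S (g * h) ≤ relLength S g + relLength S h := by
  obtain ⟨u, hul, hu, hup⟩ := spec hg
  obtain ⟨v, hvl, hv, hvp⟩ := spec hh
  have : relLength S ((u ++ v).prod) ≤ (u ++ v).length :=
    le_of_word (by
      intro x hx
      rcases List.mem_append.1 hx with h | h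
      exacts [hu x h, hv x h])
  simpa [hup, hvp, hul, hvl] using this

lemma inv_le {g : G} (hg : g ∈ Subgroup.closure S) :
    relLength S g⁻¹ ≤ relLength S g := by
  obtain ⟨u, hul, hu, hup⟩ := spec hg
  have : relLength S (((u.map fun x => x⁻¹).reverse).prod) ≤ ((u.map fun x => x⁻¹).reverse).length := by
    refine le_of_word ?_
    intro x hx
    simp only [List.mem_reverse, List.mem_map] at hx
    obtain ⟨y, hy, rfl⟩ := hx
    rcases hu y hy with h | h
    · exact Or.inr (by simpa using h)
    · exact Or.inl h
  rw [← List.prod_inv_reverse, hup] at this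
  simpa [hul] using this

lemma inv {g : G} (hg : g ∈ Subgroup.closure S) :
    relLength S g⁻¹ = relLength S g :=
  le_antisymm (inv_le hg) (by simpa using inv_le (S := S) (g := g⁻¹) (by exact inv_mem hg))

lemma eq_one_of_relLength_eq_zero {g : G} (hg : g ∈ Subgroup.closure S)
    (h0 : relLength S g = 0) : g = 1 := by
  obtain ⟨w, hwl, _, hwp⟩ := spec hg
  rw [h0, List.length_eq_zero_iff] at hwl
  simp [hwl] at hwp; exact hwp.symm

end RL


namespace RL
variable {G : Type*} [Group G] (S : Set G)

noncomputable def d (x y : G) : ℕ := relLength S (x⁻¹ * y)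

noncomputable def gp (p x y : G) : ℝ := ((d S p x : ℝ) + (d S p y : ℝ) - (d S x y : ℝ)) / 2

variable {S}

lemma memS (hS : Subgroup.closure S = ⊤) (g : G) : g ∈ Subgroup.closure S :=
  hS.symm ▸ Subgroup.mem_top g

lemma d_self (x : G) : d S x x = 0 := by simp [d, RL.one]

lemma d_symm (hS : Subgroup.closure S = ⊤) (x y : G) : d S x y = d S y x := by
  have h : (x⁻¹ * y)⁻¹ = y⁻¹ * x := by group
  rw [d, ← RL.inv (memS hS _), h]; rfl

lemma d_triangle (hS : Subgroup.closure S = ⊤) (x y z : G) :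
    d S x z ≤ d S x y + d S y z := by
  have h : x⁻¹ * z = (x⁻¹ * y) * (y⁻¹ * z) := by group
  rw [d, h]
  exact RL.mul_le (memS hS _) (memS hS _)

lemma gp_nonneg (hS : Subgroup.closure S = ⊤) (p x y : G) : 0 ≤ gp S p x y := by
  have h3 := d_triangle hS x p y
  have hxp := d_symm hS x p
  have : (d S x y : ℝ) ≤ (d S p x : ℝ) + (d S p y : ℝ) := by exact_mod_cast by omega
  unfold gp; linarith

lemma gp_step (hS : Subgroup.closure S = ⊤) (p x y : G) :
    (d S p x : ℝ) - (d S x y : ℝ) ≤ gp S p x y := by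
  have h' : (d S p x : ℝ) ≤ (d S p y : ℝ) + (d S x y : ℝ) := by
    have h1 := d_triangle hS p y x
    have h2 := d_symm hS y x
    exact_mod_cast by omega
  unfold gp
  linarith

end RL


namespace RL
variable {G : Type*} [Group G] {S : Set G}

lemma gp_hyp (hS : Subgroup.closure S = ⊤) (δ : ℕ)
    (h4 : ∀ x y z w : G, d S x y + d S z w ≤
      max (d S x z + d S y w) (d S x w + d S y z) + 2 * δ)
    (p x y z : G) : min (gp S p x y) (gp S p y z) ≤ gp S p x z + δ := by
  have hinst := h4 x z y p
  have e1 := d_symm hS z p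
  have e2 := d_symm hS z y
  have e3 := d_symm hS x p
  have e4 := d_symm hS y p
  rcases le_total (d S x y + d S z p) (d S x p + d S z y) with hc | hc
  · rw [max_eq_right hc] at hinst
    have hr : (d S x z : ℝ) + d S y p ≤ (d S x p : ℝ) + d S z y + 2 * δ := by
      exact_mod_cast hinst
    refine le_trans (min_le_right _ _) ?_
    unfold gp
    rw [e2, e3, e4] at hr
    linarith
  · rw [max_eq_left hc] at hinst
    have hr : (d S x z : ℝ) + d S y p ≤ (d S x y : ℝ) + d S z p + 2 * δ := by
      exact_mod_cast hinst
    refine le_trans (min_le_left _ _) ?_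
    unfold gp
    rw [e1, e4] at hr
    linarith

lemma chain (δ : ℕ)
    (hgp : ∀ p x y z : G, min (gp S p x y) (gp S p y z) ≤ gp S p x z + δ)
    (p : G) (c : ℝ) :
    ∀ N : ℕ, ∀ (x : ℕ → G) (m : ℕ), 1 ≤ m → m ≤ 2 ^ N →
      (∀ j < m, c ≤ gp S p (x j) (x (j + 1))) →
      c - δ * N ≤ gp S p (x 0) (x m) := by
  intro N
  induction N with
  | zero =>
    intro x m h1 h2 hj
    have hm : m = 1 := by omega
    subst hm
    simpa using hj 0 (by norm_num)
  | succ N ih =>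
    intro x m h1 h2 hj
    have hδ : (0 : ℝ) ≤ (δ : ℕ) := Nat.cast_nonneg δ
    by_cases hm : m ≤ 2 ^ N
    · have h := ih x m h1 hm hj
      have : (δ : ℝ) * N ≤ (δ : ℝ) * (N + 1) := by nlinarith
      push_cast
      push_cast at h
      linarith
    · push_neg at hm
      have h2N : 2 ^ (N + 1) = 2 ^ N + 2 ^ N := by ring
      have h1' : 1 ≤ 2 ^ N := Nat.one_le_two_pow
      have ha := ih x (2 ^ N) h1' le_rfl (fun j hjt => hj j (by omega))
      have hb := ih (fun j => x (2 ^ N + j)) (m - 2 ^ N) (by omega) (by omega)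
        (fun j hjm => by
          have h := hj (2 ^ N + j) (by omega)
          simpa [Nat.add_assoc] using h)
      simp only [Nat.add_zero] at hb
      have hbm : 2 ^ N + (m - 2 ^ N) = m := by omega
      rw [hbm] at hb
      have key := hgp p (x 0) (x (2 ^ N)) (x m)
      have hmin : c - δ * N ≤ min (gp S p (x 0) (x (2 ^ N))) (gp S p (x (2 ^ N)) (x m)) :=
        le_min ha hb
      push_cast
      push_cast at hmin
      linarith [le_trans hmin key]

end RL


namespace RL
variable {G : Type*} [Group G] {S : Set G}

lemma gen_le (hS : Subgroup.closure S = ⊤) {y : G} (hy : y ∈ S ∨ y⁻¹ ∈ S) :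
    relLength S y ≤ 1 := by
  rcases hy with h | h
  · simpa using RL.le_of_word (S := S) (w := [y]) (by simpa using Or.inl h)
  · have h1 : relLength S y⁻¹ ≤ 1 := by
      simpa using RL.le_of_word (S := S) (w := [y⁻¹]) (by simpa using Or.inl h)
    rwa [RL.inv (memS hS y)] at h1

lemma relLength_take_le (w : List G) (hw : ∀ x ∈ w, x ∈ S ∨ x⁻¹ ∈ S) (i : ℕ) :
    relLength S (w.take i).prod ≤ i := by
  have h := RL.le_of_word (S := S) (w := w.take i)
    (fun x hx => hw x (List.take_subset _ _ hx))
  exact h.trans (by simpa using List.length_take_le i w)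

lemma d_prefix_le (w : List G) (hw : ∀ x ∈ w, x ∈ S ∨ x⁻¹ ∈ S) {i j : ℕ} (hij : i ≤ j) :
    d S (w.take i).prod (w.take j).prod ≤ j - i := by
  have hdecomp : w.take j = w.take i ++ ((w.drop i).take (j - i)) := by
    rw [← List.take_add]
    congr 1
    omega
  have hseg : ((w.take i).prod)⁻¹ * (w.take j).prod = ((w.drop i).take (j - i)).prod := by
    rw [hdecomp, List.prod_append]
    group
  rw [d, hseg]
  refine (RL.le_of_word ?_).trans ?_
  · exact fun x hx => hw x (List.drop_subset _ _ (List.take_subset _ _ hx))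
  · simpa using List.length_take_le (j - i) (w.drop i)

lemma d_one_left (g : G) : d S 1 g = relLength S g := by simp [d]

lemma d_prefix_eq (hS : Subgroup.closure S = ⊤) (w : List G)
    (hw : ∀ x ∈ w, x ∈ S ∨ x⁻¹ ∈ S) (hgeo : w.length = relLength S w.prod)
    {i j : ℕ} (hij : i ≤ j) (hj : j ≤ w.length) :
    d S (w.take i).prod (w.take j).prod = j - i := by
  refine le_antisymm (d_prefix_le w hw hij) ?_
  have h1 : relLength S w.prod ≤ relLength S (w.take i).prod
      + (d S (w.take i).prod (w.take j).prod + relLength S ((w.drop j).prod)) := by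
    have hd1 : d S 1 w.prod ≤ d S 1 (w.take i).prod + d S (w.take i).prod w.prod :=
      d_triangle hS _ _ _
    have hd2 : d S (w.take i).prod w.prod ≤
        d S (w.take i).prod (w.take j).prod + d S (w.take j).prod w.prod :=
      d_triangle hS _ _ _
    have hd3 : d S (w.take j).prod w.prod = relLength S ((w.drop j).prod) := by
      have hsplit : (w.take j).prod * (w.drop j).prod = w.prod := by
        rw [← List.prod_append, List.take_append_drop]
      have hmid : ((w.take j).prod)⁻¹ * w.prod = (w.drop j).prod := by
        rw [← hsplit]; group
      rw [d, hmid]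
    rw [d_one_left, d_one_left] at hd1
    omega
  have h2 : relLength S (w.take i).prod ≤ i := relLength_take_le w hw i
  have h3 : relLength S ((w.drop j).prod) ≤ w.length - j := by
    have h := RL.le_of_word (S := S) (w := w.drop j)
      (fun x hx => hw x (List.drop_subset _ _ hx))
    exact h.trans (by simp)
  omega

noncomputable def dep (S : Set G) (H : Subgroup G) (x : G) : ℕ :=
  sInf {n | ∃ h' ∈ H, d S x h' = n}

lemma dep_spec (H : Subgroup G) (x : G) : ∃ h' ∈ H, d S x h' = dep S H x := by
  have hne : {n | ∃ h' ∈ H, d S x h' = n}.Nonempty := ⟨d S x 1, 1, one_mem H, rfl⟩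
  exact Nat.sInf_mem hne

lemma dep_le (H : Subgroup G) (x : G) {h' : G} (hh' : h' ∈ H) :
    dep S H x ≤ d S x h' := Nat.sInf_le ⟨h', hh', rfl⟩

end RL


namespace RL
variable {G : Type*} [Group G]

lemma main_instance (S T : Finset G)
    (hS : Subgroup.closure (S : Set G) = ⊤)
    (H : Subgroup G) (hT : Subgroup.closure (T : Set G) = H)
    (δ : ℕ)
    (hgp : ∀ p x y z : G, min (gp (S : Set G) p x y) (gp (S : Set G) p y z) ≤
      gp (S : Set G) p x z + δ)
    (f : ℕ → ℕ) (hmono : Monotone f)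
    (hdis : ∀ h ∈ H, relLength (T : Set G) h ≤ f (relLength (S : Set G) h))
    (L : ℕ) (hL : ∀ t ∈ T, relLength (S : Set G) t ≤ L)
    (h : G) (hh : h ∈ H) (w : List G)
    (hw : ∀ x ∈ w, x ∈ (S : Set G) ∨ x⁻¹ ∈ (S : Set G)) (hwp : w.prod = h)
    (hwg : w.length = relLength (S : Set G) h)
    (i : ℕ) (hi : i ≤ w.length) (k : ℕ) (hkL : L + 1 ≤ k)
    (hdeep : ∀ h' ∈ H, ¬ relLength (S : Set G) (((w.take i).prod)⁻¹ * h') ≤ k) :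
    ∃ k' : ℕ, k < k' ∧
      2 ^ ((k' - (L + 1) - 1) / (δ + 1)) + 1 ≤ f (6 * k') + 2 * k' := by
  have hgeo : w.length = relLength (S : Set G) w.prod := by rw [hwp]; exact hwg
  -- the maximally deep prefix
  have hne : (Finset.range (w.length + 1)).Nonempty := ⟨0, by simp⟩
  obtain ⟨i₀, hi₀mem, hmax⟩ := Finset.exists_max_image (Finset.range (w.length + 1))
    (fun j => dep (S : Set G) H ((w.take j).prod)) hne
  have hi₀ : i₀ ≤ w.length := by simpa [Nat.lt_succ_iff] using hi₀mem
  set k' := dep (S : Set G) H ((w.take i₀).prod) with hk'def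
  -- k < k'
  have hkk' : k < k' := by
    obtain ⟨h', hh', hd⟩ := dep_spec (S := (S : Set G)) H ((w.take i).prod)
    have h1 : ¬ d (S : Set G) ((w.take i).prod) h' ≤ k := hdeep h' hh'
    have h2 : dep (S : Set G) H ((w.take i).prod) ≤ k' :=
      hmax i (by simp [Nat.lt_succ_iff, hi])
    omega
  -- depth is at most distance to the two endpoints
  have hdep_pos : ∀ j, j ≤ w.length → dep (S : Set G) H ((w.take j).prod) ≤ j := by
    intro j hj
    refine (dep_le H _ (one_mem H)).trans ?_
    have e1 : d (S : Set G) ((w.take j).prod) 1 = relLength (S : Set G) ((w.take j).prod)⁻¹ := by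
      simp [d]
    rw [e1, RL.inv (memS hS _)]
    exact relLength_take_le w hw j
  have hdep_neg : ∀ j, j ≤ w.length → dep (S : Set G) H ((w.take j).prod) ≤ w.length - j := by
    intro j hj
    refine (dep_le H _ hh).trans ?_
    have hdj : d (S : Set G) ((w.take j).prod) (w.take w.length).prod = w.length - j :=
      d_prefix_eq hS w hw hgeo hj le_rfl
    rw [List.take_length, hwp] at hdj
    omega
  have hk'i : k' ≤ i₀ := hdep_pos i₀ hi₀
  have hk'n : k' ≤ w.length - i₀ := hdep_neg i₀ hi₀
  -- the two cut points
  set ja := i₀ - min i₀ (2 * k') with hjadef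
  set jb := i₀ + min (w.length - i₀) (2 * k') with hjbdef
  have hja : ja ≤ i₀ := by omega
  have hjb : i₀ ≤ jb := by omega
  have hjbn : jb ≤ w.length := by omega
  have hdpa : d (S : Set G) ((w.take i₀).prod) ((w.take ja).prod) = min i₀ (2 * k') := by
    rw [d_symm hS, d_prefix_eq hS w hw hgeo hja hi₀]
    omega
  have hdpb : d (S : Set G) ((w.take i₀).prod) ((w.take jb).prod)
      = min (w.length - i₀) (2 * k') := by
    rw [d_prefix_eq hS w hw hgeo hjb hjbn]
    omega
  have hdab : d (S : Set G) ((w.take ja).prod) ((w.take jb).prod) = jb - ja :=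
    d_prefix_eq hS w hw hgeo (by omega) hjbn
  -- nearest subgroup elements
  obtain ⟨ha, haH, hda⟩ := dep_spec (S := (S : Set G)) H ((w.take ja).prod)
  obtain ⟨hb, hbH, hdb⟩ := dep_spec (S := (S : Set G)) H ((w.take jb).prod)
  set qa := dep (S : Set G) H ((w.take ja).prod) with hqadef
  set qb := dep (S : Set G) H ((w.take jb).prod) with hqbdef
  have hqak : qa ≤ k' := hmax ja (by simp [Nat.lt_succ_iff]; omega)
  have hqbk : qb ≤ k' := hmax jb (by simp [Nat.lt_succ_iff]; omega)
  have hqaja : qa ≤ ja := hdep_pos ja (by omega)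
  have hqbnjb : qb ≤ w.length - jb := hdep_neg jb hjbn
  -- geodesic words to the nearest subgroup elements
  obtain ⟨ua, hual, huaw, huap⟩ := RL.spec (memS hS (((w.take ja).prod)⁻¹ * ha))
  obtain ⟨ub, hubl, hubw, hubp⟩ := RL.spec (memS hS (((w.take jb).prod)⁻¹ * hb))
  have hual' : ua.length = qa := by rw [hual]; exact hda
  have hubl' : ub.length = qb := by rw [hubl]; exact hdb
  set ub' := (ub.map fun x => x⁻¹).reverse with hub'def
  have hub'l : ub'.length = qb := by simp [hub'def, hubl']
  have hub'w : ∀ x ∈ ub', x ∈ (S : Set G) ∨ x⁻¹ ∈ (S : Set G) := by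
    intro x hx
    simp only [hub'def, List.mem_reverse, List.mem_map] at hx
    obtain ⟨y, hy, rfl⟩ := hx
    rcases hubw y hy with h1 | h1
    · exact Or.inr (by simpa using h1)
    · exact Or.inl h1
  have hub'p : ub'.prod = hb⁻¹ * (w.take jb).prod := by
    rw [hub'def, ← List.prod_inv_reverse, hubp]
    group
  -- the connecting subgroup element and its geodesic T-word
  have hgH : ha⁻¹ * hb ∈ H := mul_mem (inv_mem haH) hbH
  have hgT : ha⁻¹ * hb ∈ Subgroup.closure (T : Set G) := by rw [hT]; exact hgH
  obtain ⟨v, hvl, hvw, hvp⟩ := RL.spec hgT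
  -- S-length of the connecting element
  have hgS : relLength (S : Set G) (ha⁻¹ * hb) ≤ 6 * k' := by
    have t1 : d (S : Set G) ha hb ≤ d (S : Set G) ha ((w.take i₀).prod)
        + d (S : Set G) ((w.take i₀).prod) hb := d_triangle hS _ _ _
    have t2 : d (S : Set G) ha ((w.take i₀).prod) ≤ d (S : Set G) ha ((w.take ja).prod)
        + d (S : Set G) ((w.take ja).prod) ((w.take i₀).prod) := d_triangle hS _ _ _
    have t3 : d (S : Set G) ((w.take i₀).prod) hb ≤
        d (S : Set G) ((w.take i₀).prod) ((w.take jb).prod)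
        + d (S : Set G) ((w.take jb).prod) hb := d_triangle hS _ _ _
    have e1 : d (S : Set G) ha ((w.take ja).prod) = qa := by rw [d_symm hS]; exact hda
    have e2 : d (S : Set G) ((w.take ja).prod) ((w.take i₀).prod) = min i₀ (2 * k') := by
      rw [← d_symm hS]; exact hdpa
    have : d (S : Set G) ha hb ≤ 6 * k' := by
      rw [e1, e2] at t2
      rw [hdpb, hdb] at t3
      omega
    exact this
  have hvf : v.length ≤ f (6 * k') := by
    rw [hvl]
    exact (hdis _ hgH).trans (hmono hgS)
  -- the chain word
  set W := ua ++ (v ++ ub') with hWdef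
  set m := W.length with hmdef
  have hm : m = qa + (v.length + qb) := by simp [hmdef, hWdef, hual', hub'l]
  have hWp : W.prod = ((w.take ja).prod)⁻¹ * (w.take jb).prod := by
    rw [hWdef, List.prod_append, List.prod_append, huap, hvp, hub'p]
    group
  -- elements of the chain word are short
  have hWshort : ∀ y ∈ W, relLength (S : Set G) y ≤ L + 1 := by
    intro y hy
    rcases List.mem_append.1 hy with h1 | h1
    · exact (gen_le hS (huaw y h1)).trans (by omega)
    · rcases List.mem_append.1 h1 with h2 | h2
      · rcases hvw y h2 with h3 | h3
        · exact (hL y h3).trans (by omega)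
        · rw [← RL.inv (memS hS y)]
          exact ((hL _ h3).trans (by omega) : relLength (S : Set G) y⁻¹ ≤ L + 1)
      · exact (gen_le hS (hub'w y h2)).trans (by omega)
  -- the chain
  set x : ℕ → G := fun s => (w.take ja).prod * (W.take s).prod with hxdef
  have hx0 : x 0 = (w.take ja).prod := by simp [hxdef]
  have hxm : x m = (w.take jb).prod := by
    rw [hxdef]
    simp only [hmdef, List.take_length, hWp]
    group
  have hstep : ∀ j, j < m → d (S : Set G) (x j) (x (j + 1)) ≤ L + 1 := by
    intro j hj
    have hj' : j < W.length := hj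
    have hprod := List.prod_take_succ W j hj'
    have e : (x j)⁻¹ * x (j + 1) = W[j] := by
      simp only [hxdef, hprod]
      group
    rw [d, e]
    exact hWshort _ (List.getElem_mem hj')
  -- all chain points are far from the deep point
  have hfar : ∀ s, s ≤ m → k' ≤ d (S : Set G) ((w.take i₀).prod) (x s) := by
    intro s hs
    rcases le_or_gt s qa with hcase | hcase
    · -- within the first geodesic word
      have htake : W.take s = ua.take s :=
        List.take_append_of_le_length (by omega)
      have hdax : d (S : Set G) ((w.take ja).prod) (x s) ≤ s := by
        have e : ((w.take ja).prod)⁻¹ * x s = (ua.take s).prod := by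
          rw [hxdef]; simp only [htake]; group
        rw [d, e]
        refine (RL.le_of_word (S := (S : Set G)) (w := ua.take s)
          (fun y hy => huaw y (List.take_subset _ _ hy))).trans ?_
        simpa using List.length_take_le s ua
      have htri : d (S : Set G) ((w.take i₀).prod) ((w.take ja).prod) ≤
          d (S : Set G) ((w.take i₀).prod) (x s) + d (S : Set G) (x s) ((w.take ja).prod) :=
        d_triangle hS _ _ _
      have hsymm : d (S : Set G) (x s) ((w.take ja).prod)
          = d (S : Set G) ((w.take ja).prod) (x s) := (d_symm hS _ _).symm
      rw [hdpa] at htri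
      rw [hsymm] at htri
      omega
    · rcases le_or_gt s (qa + v.length) with hcase2 | hcase2
      · -- within the T-word: chain point lies in H
        obtain ⟨r, hrs, hrv⟩ : ∃ r, s = ua.length + r ∧ r ≤ v.length :=
          ⟨s - qa, by omega, by omega⟩
        subst hrs
        have htake : W.take (ua.length + r) = ua ++ (v.take r) := by
          rw [hWdef, List.take_length_add_append, List.take_append_of_le_length hrv]
        have hxs : x (ua.length + r) = ha * (v.take r).prod := by
          rw [hxdef]
          simp only [htake, List.prod_append, huap]
          group
        have hmem : x (ua.length + r) ∈ H := by
          rw [hxs]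
          refine mul_mem haH (Subgroup.list_prod_mem H ?_)
          intro y hy
          rcases hvw y (List.take_subset _ _ hy) with h1 | h1
          · exact hT ▸ Subgroup.subset_closure h1
          · exact (inv_mem_iff).1 (hT ▸ Subgroup.subset_closure h1)
        exact dep_le H _ hmem
      · -- within the last geodesic word
        obtain ⟨r, hrs, hrb⟩ : ∃ r, s = ua.length + (v.length + r) ∧ r ≤ ub'.length :=
          ⟨s - qa - v.length, by omega, by omega⟩
        subst hrs
        have htake : W.take (ua.length + (v.length + r)) = ua ++ (v ++ ub'.take r) := by
          rw [hWdef, List.take_length_add_append, List.take_length_add_append]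
        have hxs : x (ua.length + (v.length + r)) = hb * (ub'.take r).prod := by
          rw [hxdef]
          simp only [htake, List.prod_append, huap, hvp]
          group
        have hdxb : d (S : Set G) (x (ua.length + (v.length + r))) ((w.take jb).prod) ≤ qb := by
          have hsplit : (ub'.take r).prod * (ub'.drop r).prod = ub'.prod := by
            rw [← List.prod_append, List.take_append_drop]
          have e : (x (ua.length + (v.length + r)))⁻¹ * (w.take jb).prod
              = (ub'.drop r).prod := by
            rw [hxs]
            have hp : hb⁻¹ * (w.take jb).prod = ub'.prod := by rw [hub'p]
            calc ((hb * (ub'.take r).prod))⁻¹ * (w.take jb).prod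
                = (ub'.take r).prod⁻¹ * (hb⁻¹ * (w.take jb).prod) := by group
              _ = (ub'.take r).prod⁻¹ * ub'.prod := by rw [hp]
              _ = (ub'.drop r).prod := by rw [← hsplit]; group
          rw [d, e]
          refine (RL.le_of_word (S := (S : Set G)) (w := ub'.drop r)
            (fun y hy => hub'w y (List.drop_subset _ _ hy))).trans ?_
          simp [hub'l]
        have htri : d (S : Set G) ((w.take i₀).prod) ((w.take jb).prod) ≤
            d (S : Set G) ((w.take i₀).prod) (x (ua.length + (v.length + r)))
            + d (S : Set G) (x (ua.length + (v.length + r))) ((w.take jb).prod) :=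
          d_triangle hS _ _ _
        rw [hdpb] at htri
        omega
  -- the Gromov product of the endpoints vanishes
  have hgpab : gp (S : Set G) ((w.take i₀).prod) ((w.take ja).prod) ((w.take jb).prod) ≤ 0 := by
    have hnat : jb - ja = min i₀ (2 * k') + min (w.length - i₀) (2 * k') := by omega
    unfold gp
    rw [hdpa, hdpb, hdab, hnat]
    push_cast
    linarith
  -- main dichotomy
  have hk'1 : 1 ≤ k' := by omega
  by_cases hm0 : m = 0
  · exfalso
    have hab : (w.take ja).prod = (w.take jb).prod := by
      rw [← hx0, ← hxm, hm0]
    rw [hab, d_self] at hdab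
    omega
  · set N := (k' - (L + 1) - 1) / (δ + 1) with hNdef
    by_cases hm2 : m ≤ 2 ^ N
    · exfalso
      have hsteps : ∀ j, j < m → ((k' : ℝ) - (L + 1)) ≤
          gp (S : Set G) ((w.take i₀).prod) (x j) (x (j + 1)) := by
        intro j hj
        have h1 := gp_step hS ((w.take i₀).prod) (x j) (x (j + 1))
        have h2 : (k' : ℝ) ≤ d (S : Set G) ((w.take i₀).prod) (x j) := by
          exact_mod_cast hfar j (by omega)
        have h3 : (d (S : Set G) (x j) (x (j + 1)) : ℝ) ≤ (L : ℝ) + 1 := by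
          exact_mod_cast hstep j hj
        linarith
      have hch := chain δ hgp ((w.take i₀).prod) ((k' : ℝ) - (L + 1)) N x m
        (by omega) hm2 hsteps
      rw [hx0, hxm] at hch
      have hreal : (k' : ℝ) ≤ (L + 1 : ℕ) + (δ : ℝ) * N := by
        push_cast
        linarith [hch, hgpab]
      have hnat : k' ≤ (L + 1) + δ * N := by exact_mod_cast hreal
      have hdiv : N * (δ + 1) ≤ k' - (L + 1) - 1 := Nat.div_mul_le_self _ _
      have hmul : δ * N ≤ N * (δ + 1) := by
        calc δ * N = N * δ := Nat.mul_comm _ _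
          _ ≤ N * δ + N := Nat.le_add_right _ _
          _ = N * (δ + 1) := by ring
      omega
    · push_neg at hm2
      refine ⟨k', hkk', ?_⟩
      rw [← hNdef]
      have : m ≤ k' + (f (6 * k') + k') := by
        rw [hm]
        omega
      omega

end RL


namespace RL
open Real Filter

lemma asympt (f : ℕ → ℕ)
    (hf : ∀ ε : ℝ, 0 < ε →
      Tendsto (fun n : ℕ => (f n : ℝ) / Real.exp (ε * n)) atTop (nhds 0))
    (M dd : ℕ) (hdd : 1 ≤ dd) :
    ∃ K : ℕ, ∀ k : ℕ, K ≤ k → f (6 * k) + 2 * k < 2 ^ ((k - M - 1) / dd) + 1 := by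
  have hlog2 : (0:ℝ) < Real.log 2 := Real.log_pos (by norm_num)
  have hddR : (0:ℝ) < (dd:ℝ) := by exact_mod_cast hdd
  set a : ℝ := Real.log 2 / (dd:ℝ) with hadef
  have ha : 0 < a := div_pos hlog2 hddR
  have hε : 0 < a / 24 := by positivity
  have hev1 : ∀ᶠ n : ℕ in atTop, (f n : ℝ) < Real.exp (a / 24 * n) := by
    have h := (hf _ hε).eventually_lt_const (by norm_num : (0:ℝ) < 1)
    filter_upwards [h] with n hn
    have hexp : 0 < Real.exp (a / 24 * n) := Real.exp_pos _
    rwa [div_lt_one hexp] at hn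
  have t1 : Tendsto (fun x : ℝ => Real.exp (-(3 * a / 4) * x)) atTop (nhds 0) :=
    Real.tendsto_exp_atBot.comp
      ((tendsto_const_mul_atBot_of_neg (by linarith : -(3 * a / 4) < 0)).2 tendsto_id)
  have t2 : Tendsto (fun x : ℝ => 2 * ((x : ℝ) ^ (1:ℝ) * Real.exp (-a * x))) atTop (nhds 0) := by
    have := (tendsto_rpow_mul_exp_neg_mul_atTop_nhds_zero 1 a ha).const_mul (2:ℝ)
    simpa using this
  have tsum : Tendsto
      (fun x : ℝ => Real.exp (-(3 * a / 4) * x) + 2 * ((x : ℝ) ^ (1:ℝ) * Real.exp (-a * x)))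
      atTop (nhds 0) := by
    have := t1.add t2
    simpa using this
  have hC : (0:ℝ) < Real.exp (-(a * ((M : ℝ) + dd))) := Real.exp_pos _
  have hev2' : ∀ᶠ k : ℕ in atTop,
      Real.exp (-(3 * a / 4) * k) + 2 * ((k : ℝ) ^ (1:ℝ) * Real.exp (-a * k)) <
        Real.exp (-(a * ((M : ℝ) + dd))) :=
    tendsto_natCast_atTop_atTop.eventually (tsum.eventually_lt_const hC)
  obtain ⟨K₁, hK₁⟩ := eventually_atTop.1 hev2'
  obtain ⟨n₁, hn₁⟩ := eventually_atTop.1 hev1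
  refine ⟨max K₁ (n₁ + 1), fun k hk => ?_⟩
  have hkK₁ : K₁ ≤ k := le_trans (le_max_left _ _) hk
  have hkn₁ : n₁ ≤ 6 * k := by
    have := le_trans (le_max_right _ _) hk
    omega
  set N : ℕ := (k - M - 1) / dd with hNdef
  have hkN : k ≤ dd * N + (M + dd) := by
    have h1 := Nat.div_add_mod (k - M - 1) dd
    rw [← hNdef] at h1
    have h2 : (k - M - 1) % dd < dd := Nat.mod_lt _ (by omega)
    omega
  have hfk : (f (6 * k) : ℝ) < Real.exp (a / 24 * ((6 * k : ℕ) : ℝ)) := hn₁ _ hkn₁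
  have hexp6 : Real.exp (a / 24 * ((6 * k : ℕ) : ℝ)) = Real.exp (a * k / 4) := by
    congr 1
    push_cast
    ring
  have key := hK₁ k hkK₁
  have hepos : (0:ℝ) < Real.exp (a * k) := Real.exp_pos _
  have e1 : Real.exp (-(3 * a / 4) * k) * Real.exp (a * k) = Real.exp (a * k / 4) := by
    rw [← Real.exp_add]
    congr 1
    ring
  have e0 : Real.exp (-a * k) * Real.exp (a * k) = 1 := by
    rw [← Real.exp_add]
    simp
  have e2 : 2 * ((k : ℝ) ^ (1:ℝ) * Real.exp (-a * k)) * Real.exp (a * k) = 2 * k := by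
    rw [Real.rpow_one]
    calc 2 * ((k : ℝ) * Real.exp (-a * k)) * Real.exp (a * k)
        = 2 * (k : ℝ) * (Real.exp (-a * k) * Real.exp (a * k)) := by ring
      _ = 2 * k := by rw [e0]; ring
  have key2 : Real.exp (a * k / 4) + 2 * (k : ℝ) <
      Real.exp (-(a * ((M : ℝ) + dd))) * Real.exp (a * k) := by
    have h := mul_lt_mul_of_pos_right key hepos
    calc Real.exp (a * k / 4) + 2 * (k : ℝ)
        = Real.exp (-(3 * a / 4) * k) * Real.exp (a * k)
          + 2 * ((k : ℝ) ^ (1:ℝ) * Real.exp (-a * k)) * Real.exp (a * k) := by rw [e1, e2]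
      _ = (Real.exp (-(3 * a / 4) * k) + 2 * ((k : ℝ) ^ (1:ℝ) * Real.exp (-a * k)))
          * Real.exp (a * k) := by ring
      _ < Real.exp (-(a * ((M : ℝ) + dd))) * Real.exp (a * k) := h
  have e3 : Real.exp (-(a * ((M : ℝ) + dd))) * Real.exp (a * k)
      = Real.exp (a * ((k : ℝ) - ((M : ℝ) + dd))) := by
    rw [← Real.exp_add]
    congr 1
    ring
  have e4 : Real.exp (a * ((k : ℝ) - ((M : ℝ) + dd))) ≤ ((2 : ℝ) ^ N : ℝ) := by
    have hkNR : (k : ℝ) - ((M : ℝ) + dd) ≤ (dd : ℝ) * N := by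
      have : (k : ℝ) ≤ (dd : ℝ) * N + ((M : ℝ) + dd) := by exact_mod_cast hkN
      linarith
    have harg : a * ((k : ℝ) - ((M : ℝ) + dd)) ≤ Real.log 2 * N := by
      have h1 : a * ((k : ℝ) - ((M : ℝ) + dd)) ≤ a * ((dd : ℝ) * N) :=
        mul_le_mul_of_nonneg_left hkNR ha.le
      have had : a * (dd : ℝ) = Real.log 2 := div_mul_cancel₀ _ (by positivity)
      have h2 : a * ((dd : ℝ) * N) = Real.log 2 * N := by rw [← had]; ring
      linarith
    calc Real.exp (a * ((k : ℝ) - ((M : ℝ) + dd))) ≤ Real.exp (Real.log 2 * N) :=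
        Real.exp_le_exp.2 harg
      _ = (2 : ℝ) ^ N := by
        rw [mul_comm, Real.exp_nat_mul, Real.exp_log (by norm_num : (0:ℝ) < 2)]
  have hfinal : (f (6 * k) : ℝ) + 2 * k < ((2 ^ N : ℕ) : ℝ) := by
    have h5 : (f (6 * k) : ℝ) < Real.exp (a * k / 4) := by rw [← hexp6]; exact hfk
    push_cast
    linarith [h5, key2, e3.le, e3.ge, e4]
  have hnat : f (6 * k) + 2 * k < 2 ^ N := by exact_mod_cast hfinal
  omega

end RL


open RL in
/-- Every subexponentially distorted finitely generated subgroup `H` of a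
hyperbolic group `G` (hyperbolicity of the word metric expressed via the four-point
condition) is undistorted (linear distortion), and hence quasi-convex: every geodesic word
over `S` between `1` and an element of `H` stays uniformly close to `H`. -/
theorem stmt5 {G : Type*} [Group G] (S T : Finset G)
    (hS : Subgroup.closure (S : Set G) = ⊤)
    (H : Subgroup G) (hT : Subgroup.closure (T : Set G) = H)
    (hhyp : ∃ δ : ℕ, ∀ x y z w : G,
      relLength (S : Set G) (x⁻¹ * y) + relLength (S : Set G) (z⁻¹ * w) ≤
        max (relLength (S : Set G) (x⁻¹ * z) + relLength (S : Set G) (y⁻¹ * w))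
          (relLength (S : Set G) (x⁻¹ * w) + relLength (S : Set G) (y⁻¹ * z)) + 2 * δ)
    (hdist : ∃ f : ℕ → ℕ, Monotone f ∧ SubexpFun f ∧
      ∀ h ∈ H, relLength (T : Set G) h ≤ f (relLength (S : Set G) h)) :
    (∃ C : ℕ, ∀ h ∈ H, relLength (T : Set G) h ≤ C * relLength (S : Set G) h + C) ∧
    (∃ k : ℕ, ∀ h ∈ H, ∀ w : List G,
      (∀ x ∈ w, x ∈ (S : Set G) ∨ x⁻¹ ∈ (S : Set G)) → w.prod = h →
      w.length = relLength (S : Set G) h →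
      ∀ i ≤ w.length, ∃ h' ∈ H, relLength (S : Set G) ((w.take i).prod⁻¹ * h') ≤ k) := by
    classical
  obtain ⟨δ, hδ⟩ := hhyp
  obtain ⟨f, hmono, hsub, hdis⟩ := hdist
  set L := T.sup (relLength (S : Set G)) with hLdef
  have hL : ∀ t ∈ T, relLength (S : Set G) t ≤ L := fun t ht => Finset.le_sup ht
  have hgp : ∀ p x y z : G, min (gp (S : Set G) p x y) (gp (S : Set G) p y z) ≤
      gp (S : Set G) p x z + δ :=
    fun p x y z => RL.gp_hyp hS δ hδ p x y z
  obtain ⟨K, hK⟩ := RL.asympt f hsub (L + 1) (δ + 1) (by omega)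
  set k₀ := max K (L + 1) with hk₀def
  -- quasiconvexity
  have hqc : ∀ h ∈ H, ∀ w : List G,
      (∀ x ∈ w, x ∈ (S : Set G) ∨ x⁻¹ ∈ (S : Set G)) → w.prod = h →
      w.length = relLength (S : Set G) h →
      ∀ i ≤ w.length, ∃ h' ∈ H, relLength (S : Set G) ((w.take i).prod⁻¹ * h') ≤ k₀ := by
    intro h hh w hw hwp hwg i hi
    by_contra hcon
    push_neg at hcon
    obtain ⟨k', hk'1, hk'2⟩ := RL.main_instance S T hS H hT δ hgp f hmono hdis L hL
      h hh w hw hwp hwg i hi k₀ (le_max_right _ _)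
      (fun h' hh' => by have := hcon h' hh'; omega)
    have hcontra := hK k' (by omega)
    omega
  refine ⟨?_, ⟨k₀, hqc⟩⟩
  -- linear distortion
  refine ⟨f (2 * k₀ + 1), fun h hh => ?_⟩
  obtain ⟨w, hwl, hw, hwp⟩ := RL.spec (RL.memS hS h)
  have hwl' : w.length = relLength (S : Set G) h := hwl
  have hch : ∀ i, i ≤ w.length →
      ∃ h' ∈ H, relLength (S : Set G) ((w.take i).prod⁻¹ * h') ≤ k₀ :=
    fun i hi => hqc h hh w hw hwp hwl' i hi
  -- a choice of nearby subgroup elements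
  obtain ⟨c, hcH, hcd, hc0, hcn⟩ : ∃ c : ℕ → G,
      (∀ i, i ≤ w.length → c i ∈ H) ∧
      (∀ i, i ≤ w.length → relLength (S : Set G) ((w.take i).prod⁻¹ * c i) ≤ k₀) ∧
      c 0 = 1 ∧ c w.length = h := by
    by_cases hn0 : w.length = 0
    · refine ⟨fun _ => 1, fun i hi => one_mem H, fun i hi => ?_, rfl, ?_⟩
      · have : i = 0 := by omega
        subst this
        simp [RL.one]
      · have hone : h = 1 := by
          refine RL.eq_one_of_relLength_eq_zero (RL.memS hS h) ?_
          omega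
        rw [hn0, hone]
    · refine ⟨fun i => if i = 0 then 1 else if i = w.length then h else
        if hi : i ≤ w.length then (hch i hi).choose else 1, ?_, ?_, by simp, by
          simp [hn0]⟩
      · intro i hi
        by_cases h0 : i = 0
        · simp [h0, one_mem H]
        · by_cases hn : i = w.length
          · simp only [if_neg h0, if_pos hn]
            exact hh
          · simp only [if_neg h0, if_neg hn, dif_pos hi]
            exact (hch i hi).choose_spec.1
      · intro i hi
        by_cases h0 : i = 0
        · subst h0
          simp [RL.one]
        · by_cases hn : i = w.length
          · simp only [if_neg h0, if_pos hn]
            rw [hn, List.take_length, hwp]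
            simp [RL.one]
          · simp only [if_neg h0, if_neg hn, dif_pos hi]
            exact (hch i hi).choose_spec.2
  -- telescoping
  have hstepS : ∀ i, i + 1 ≤ w.length →
      relLength (S : Set G) ((c i)⁻¹ * c (i + 1)) ≤ 2 * k₀ + 1 := by
    intro i hi1
    have hi : i ≤ w.length := by omega
    have t1 : RL.d (S : Set G) (c i) (c (i + 1)) ≤
        RL.d (S : Set G) (c i) ((w.take i).prod) +
        (RL.d (S : Set G) ((w.take i).prod) ((w.take (i + 1)).prod) +
         RL.d (S : Set G) ((w.take (i + 1)).prod) (c (i + 1))) := by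
      have a1 := RL.d_triangle hS (c i) ((w.take i).prod) (c (i + 1))
      have a2 := RL.d_triangle hS ((w.take i).prod) ((w.take (i + 1)).prod) (c (i + 1))
      omega
    have t2 : RL.d (S : Set G) (c i) ((w.take i).prod) ≤ k₀ := by
      rw [RL.d_symm hS]
      exact hcd i hi
    have t3 : RL.d (S : Set G) ((w.take i).prod) ((w.take (i + 1)).prod) ≤ 1 := by
      have := RL.d_prefix_le w hw (by omega : i ≤ i + 1)
      omega
    have t4 : RL.d (S : Set G) ((w.take (i + 1)).prod) (c (i + 1)) ≤ k₀ := hcd (i + 1) hi1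
    have : RL.d (S : Set G) (c i) (c (i + 1)) ≤ 2 * k₀ + 1 := by omega
    exact this
  have htel : ∀ i, i ≤ w.length →
      relLength (T : Set G) (c i) ≤ i * f (2 * k₀ + 1) := by
    intro i
    induction i with
    | zero => intro _; simp [hc0, RL.one]
    | succ i ih =>
      intro hi1
      have hi : i ≤ w.length := by omega
      have hgH : (c i)⁻¹ * c (i + 1) ∈ H :=
        mul_mem (inv_mem (hcH i hi)) (hcH (i + 1) hi1)
      have hTg : relLength (T : Set G) ((c i)⁻¹ * c (i + 1)) ≤ f (2 * k₀ + 1) :=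
        (hdis _ hgH).trans (hmono (hstepS i hi1))
      have hsplit : c (i + 1) = c i * ((c i)⁻¹ * c (i + 1)) := by group
      rw [hsplit]
      have hm1 : c i ∈ Subgroup.closure (T : Set G) := by rw [hT]; exact hcH i hi
      have hm2 : (c i)⁻¹ * c (i + 1) ∈ Subgroup.closure (T : Set G) := by rw [hT]; exact hgH
      refine (RL.mul_le hm1 hm2).trans ?_
      have := ih hi
      calc relLength (T : Set G) (c i) + relLength (T : Set G) ((c i)⁻¹ * c (i + 1))
          ≤ i * f (2 * k₀ + 1) + f (2 * k₀ + 1) := Nat.add_le_add this hTg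
        _ = (i + 1) * f (2 * k₀ + 1) := (Nat.succ_mul _ _).symm
  have hfin := htel w.length le_rfl
  rw [hcn, hwl'] at hfin
  calc relLength (T : Set G) h ≤ relLength (S : Set G) h * f (2 * k₀ + 1) := hfin
    _ = f (2 * k₀ + 1) * relLength (S : Set G) h := Nat.mul_comm _ _
    _ ≤ f (2 * k₀ + 1) * relLength (S : Set G) h + f (2 * k₀ + 1) := Nat.le_add_right _ _
end
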